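/- arXiv:1805.08476 — 4 statements merged into one kernel-verified Lean document; each statement's English description precedes it below -/
import Mathlib

section
/- Let H be a real Hilbert space with Hilbert basis (e_i)_{i∈I}, let S and A be bounded linear operators on H, let q ≥ 1 be an integer, and suppose the range of A has dimension at most q. Then q · a_{2q}(S)² ≤ ∑_{i∈I} ‖(S − A∘S)(e_i)‖² (an inequality in [0,∞]). -/
open scoped ENNReal

/-- The `j`-th approximation number of a bounded linear operator `T` on a real Hilbert
space: `a_j(T) = inf{‖T - F‖ : F bounded linear, dim(range F) < j}`. -/
noncomputable def approxNumber {H : Type*} [NormedAddCommGroup H]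
    [InnerProductSpace ℝ H] (T : H →L[ℝ] H) (j : ℕ) : ℝ :=
  sInf {x : ℝ | ∃ F : H →L[ℝ] H,
    Module.rank ℝ (LinearMap.range (F : H →ₗ[ℝ] H)) < (j : Cardinal) ∧ x = ‖T - F‖}

/-!
Write `T = S - A ∘ S`. Since `S = A ∘ S + T` and `A ∘ S` has rank at most `q`, we get
`a_{2q}(S) ≤ a_q(T)`, so it suffices to show `q · a_q(T)² ≤ ∑ ‖T eᵢ‖²`. Fix `c < a_q(T)`. For every
subspace `V` of dimension `< q`, the operator `T ∘ P_V` has rank `< q`, so `‖T ∘ P_{V⊥}‖ > c`: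
some unit vector of `V⊥` is stretched by more than `c`. Choosing such vectors greedily yields
`q` orthonormal vectors `x_j` with `‖T x_j‖ > c`, and `∑ ‖T x_j‖² ≤ ∑ ‖T eᵢ‖²` because a
Hilbert–Schmidt sum over an orthonormal family is dominated, via the adjoint, by the one over a
Hilbert basis.
-/

open scoped InnerProductSpace Topology
open ContinuousLinearMap (adjoint)

section InnerProductSpace

variable {ι 𝕜 E : Type*} [RCLike 𝕜] [NormedAddCommGroup E] [InnerProductSpace 𝕜 E]

theorem HilbertBasis.enorm_sq_eq_tsum (b : HilbertBasis ι 𝕜 E) (x : E) :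
    ‖x‖ₑ ^ 2 = ∑' i, ‖⟪b i, x⟫_𝕜‖ₑ ^ 2 := by
  have h := lp.hasSum_norm (p := 2) (by norm_num) (b.repr x)
  simp only [b.repr_apply_apply, LinearIsometryEquiv.norm_map, ENNReal.toReal_ofNat,
    Real.rpow_two] at h
  simp only [← ofReal_norm, ← ENNReal.ofReal_pow (norm_nonneg _), ← h.tsum_eq]
  exact ENNReal.ofReal_tsum_of_nonneg (fun _ => by positivity) h.summable

theorem Orthonormal.tsum_enorm_inner_sq_le {v : ι → E} (hv : Orthonormal 𝕜 v) (x : E) :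
    ∑' i, ‖⟪v i, x⟫_𝕜‖ₑ ^ 2 ≤ ‖x‖ₑ ^ 2 := by
  simp only [← ofReal_norm, ← ENNReal.ofReal_pow (norm_nonneg _)]
  rw [← ENNReal.ofReal_tsum_of_nonneg (fun _ => by positivity) (hv.inner_products_summable x)]
  exact ENNReal.ofReal_le_ofReal (hv.tsum_inner_products_le x)

theorem Orthonormal.snoc {n : ℕ} {v : Fin n → E} (hv : Orthonormal 𝕜 v) {u : E} (hu : ‖u‖ = 1)
    (hvu : ∀ j, ⟪v j, u⟫_𝕜 = 0) : Orthonormal 𝕜 (Fin.snoc v u : Fin (n + 1) → E) := by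
  rw [orthonormal_iff_ite] at hv ⊢
  intro i j
  induction i using Fin.lastCases <;> induction j using Fin.lastCases <;>
    simp [hu, hvu, hv, fun j => inner_eq_zero_symm.1 (hvu j), Fin.castSucc_ne_last,
      (Fin.castSucc_ne_last _).symm]

theorem exists_orthonormal_of_forall_exists_orthogonal {P : E → Prop} {n : ℕ}
    (h : ∀ V : Submodule 𝕜 E, Module.rank 𝕜 V < n → ∃ u ∈ Vᗮ, ‖u‖ = 1 ∧ P u) :
    ∃ v : Fin n → E, Orthonormal 𝕜 v ∧ ∀ j, P (v j) := by
  induction n with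
  | zero => exact ⟨Fin.elim0, orthonormal_iff_ite.2 (fun i => i.elim0), fun j => j.elim0⟩
  | succ n ih =>
    obtain ⟨v, hv, hPv⟩ := ih fun V hV => h V (hV.trans (by norm_cast; omega))
    have hcard : Cardinal.mk (Set.range v) ≤ n := by
      simpa using Cardinal.mk_range_le_lift (f := v)
    have hrank : Module.rank 𝕜 (Submodule.span 𝕜 (Set.range v)) < (n + 1 : ℕ) :=
      (rank_span_le _).trans_lt (hcard.trans_lt (by norm_cast; omega))
    obtain ⟨u, hu_perp, hu, hPu⟩ := h _ hrank
    refine ⟨Fin.snoc v u, hv.snoc hu fun j => ?_, fun j => ?_⟩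
    · exact Submodule.inner_right_of_mem_orthogonal
        (Submodule.subset_span (Set.mem_range_self j)) hu_perp
    · induction j using Fin.lastCases <;> simp [hPu, hPv]

variable {F : Type*} [NormedAddCommGroup F] [InnerProductSpace 𝕜 F]
  [CompleteSpace E] [CompleteSpace F]

theorem Orthonormal.tsum_enorm_apply_sq_le_adjoint {κ : Type*} {v : ι → E}
    (hv : Orthonormal 𝕜 v) (b : HilbertBasis κ 𝕜 F) (T : E →L[𝕜] F) :
    ∑' j, ‖T (v j)‖ₑ ^ 2 ≤ ∑' k, ‖adjoint T (b k)‖ₑ ^ 2 :=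
  calc ∑' j, ‖T (v j)‖ₑ ^ 2
      = ∑' j, ∑' k, ‖⟪v j, adjoint T (b k)⟫_𝕜‖ₑ ^ 2 := by
        congr! 2 with j
        rw [b.enorm_sq_eq_tsum]
        congr! 2 with k
        rw [ContinuousLinearMap.adjoint_inner_right, ← ofReal_norm, norm_inner_symm,
          ofReal_norm]
    _ = ∑' k, ∑' j, ‖⟪v j, adjoint T (b k)⟫_𝕜‖ₑ ^ 2 := ENNReal.tsum_comm
    _ ≤ ∑' k, ‖adjoint T (b k)‖ₑ ^ 2 :=
        ENNReal.tsum_le_tsum fun k => hv.tsum_enorm_inner_sq_le _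

theorem Orthonormal.tsum_enorm_apply_sq_le {κ : Type*} {v : κ → E} (hv : Orthonormal 𝕜 v)
    (b : HilbertBasis ι 𝕜 E) (T : E →L[𝕜] F) :
    ∑' j, ‖T (v j)‖ₑ ^ 2 ≤ ∑' i, ‖T (b i)‖ₑ ^ 2 := by
  obtain ⟨w, b', -⟩ := exists_hilbertBasis 𝕜 F
  simpa using (hv.tsum_enorm_apply_sq_le_adjoint b' T).trans
    (b'.orthonormal.tsum_enorm_apply_sq_le_adjoint b (adjoint T))

end InnerProductSpace

section ApproxNumber

variable {H : Type*} [NormedAddCommGroup H] [InnerProductSpace ℝ H]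

theorem approxNumber_nonneg (T : H →L[ℝ] H) (j : ℕ) : 0 ≤ approxNumber T j :=
  Real.sInf_nonneg fun _ ⟨_, _, hx⟩ => hx ▸ norm_nonneg _

theorem approxNumber_le_norm_sub {T F : H →L[ℝ] H} {j : ℕ}
    (hF : Module.rank ℝ (LinearMap.range (F : H →ₗ[ℝ] H)) < j) :
    approxNumber T j ≤ ‖T - F‖ :=
  csInf_le ⟨0, fun _ ⟨_, _, hx⟩ => hx ▸ norm_nonneg _⟩ ⟨F, hF, rfl⟩

theorem approxNumber_add_le {R : H →L[ℝ] H} {k j : ℕ}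
    (hR : Module.rank ℝ (LinearMap.range (R : H →ₗ[ℝ] H)) ≤ k) (hj : 0 < j) (T : H →L[ℝ] H) :
    approxNumber (R + T) (k + j) ≤ approxNumber T j := by
  have hzero : Module.rank ℝ (LinearMap.range ((0 : H →L[ℝ] H) : H →ₗ[ℝ] H)) < j := by
    simpa using hj
  refine le_csInf ⟨_, 0, hzero, rfl⟩ fun _ ⟨F, hF, hx⟩ => hx ▸ ?_
  obtain ⟨m, hm⟩ := Cardinal.lt_aleph0.1 (hF.trans Cardinal.natCast_lt_aleph0)
  rw [hm, Nat.cast_lt] at hF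
  have hRF : Module.rank ℝ (LinearMap.range ((R + F : H →L[ℝ] H) : H →ₗ[ℝ] H)) < (k + j : ℕ) :=
    calc _ ≤ Module.rank ℝ (LinearMap.range (R : H →ₗ[ℝ] H)) + m :=
          hm ▸ LinearMap.rank_add_le (R : H →ₗ[ℝ] H) F
      _ ≤ (k + m : ℕ) := by push_cast; gcongr
      _ < (k + j : ℕ) := by exact_mod_cast Nat.add_lt_add_left hF k
  simpa using approxNumber_le_norm_sub (T := R + T) hRF

theorem exists_unit_mem_orthogonal_of_lt_approxNumber {T : H →L[ℝ] H} {j : ℕ} {c : ℝ}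
    (hc : 0 ≤ c) (hcT : c < approxNumber T j) {V : Submodule ℝ H} (hV : Module.rank ℝ V < j) :
    ∃ u ∈ Vᗮ, ‖u‖ = 1 ∧ c < ‖T u‖ := by
  have : FiniteDimensional ℝ V :=
    Module.rank_lt_aleph0_iff.1 (hV.trans Cardinal.natCast_lt_aleph0)
  by_contra! h
  have hTV : ‖T ∘L Vᗮ.subtypeL‖ ≤ c :=
    ContinuousLinearMap.opNorm_le_of_unit_norm hc fun u hu => h u u.2 hu
  have hrank :
      Module.rank ℝ (LinearMap.range ((T ∘L V.starProjection : H →L[ℝ] H) : H →ₗ[ℝ] H)) < j :=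
    calc _ ≤ Module.rank ℝ (LinearMap.range (V.starProjection : H →ₗ[ℝ] H)) :=
          LinearMap.rank_comp_le_right _ _
      _ < j := by rwa [Submodule.range_starProjection]
  have hsub : T - T ∘L V.starProjection = (T ∘L Vᗮ.subtypeL) ∘L Vᗮ.orthogonalProjectionOnto := by
    change _ = T ∘L Vᗮ.starProjection
    rw [Submodule.starProjection_orthogonal']
    ext x
    simp
  refine hcT.not_ge ((approxNumber_le_norm_sub hrank).trans ?_)
  rw [hsub]
  calc _ ≤ ‖T ∘L Vᗮ.subtypeL‖ * ‖Vᗮ.orthogonalProjectionOnto‖ :=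
        ContinuousLinearMap.opNorm_comp_le _ _
    _ ≤ c * 1 := by gcongr; exact Submodule.orthogonalProjectionOnto_norm_le _
    _ = c := mul_one c

theorem natCast_mul_ofReal_approxNumber_sq_le [CompleteSpace H] {ι : Type*}
    (b : HilbertBasis ι ℝ H) (T : H →L[ℝ] H) (q : ℕ) :
    (q : ℝ≥0∞) * ENNReal.ofReal (approxNumber T q ^ 2) ≤ ∑' i, ‖T (b i)‖ₑ ^ 2 := by
  have below :
      ∀ c < approxNumber T q, (q : ℝ≥0∞) * ENNReal.ofReal c ^ 2 ≤ ∑' i, ‖T (b i)‖ₑ ^ 2 := by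
    intro c hcT
    rcases lt_or_ge c 0 with hc | hc
    · simp [ENNReal.ofReal_of_nonpos hc.le]
    obtain ⟨v, hv, hvT⟩ := exists_orthonormal_of_forall_exists_orthogonal
      fun V hV => exists_unit_mem_orthogonal_of_lt_approxNumber hc hcT hV
    calc (q : ℝ≥0∞) * ENNReal.ofReal c ^ 2 = ∑ _j : Fin q, ENNReal.ofReal c ^ 2 := by simp
      _ ≤ ∑ j, ‖T (v j)‖ₑ ^ 2 := by
          gcongr with j
          exact ofReal_norm (T (v j)) ▸ ENNReal.ofReal_le_ofReal (hvT j).le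
      _ = ∑' j, ‖T (v j)‖ₑ ^ 2 := (tsum_fintype _).symm
      _ ≤ ∑' i, ‖T (b i)‖ₑ ^ 2 := hv.tsum_enorm_apply_sq_le b T
  have hcont : Continuous fun c : ℝ => (q : ℝ≥0∞) * ENNReal.ofReal c ^ 2 :=
    (ENNReal.continuous_const_mul (ENNReal.natCast_ne_top q)).comp
      ((ENNReal.continuous_pow 2).comp ENNReal.continuous_ofReal)
  rw [ENNReal.ofReal_pow (approxNumber_nonneg T q)]
  exact le_of_tendsto (x := 𝓝[<] approxNumber T q)
    ((hcont.tendsto _).mono_left nhdsWithin_le_nhds) (eventually_nhdsWithin_of_forall below)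

end ApproxNumber

/-- If `(e_i)_{i∈I}` is a Hilbert basis of `H`, `S, A` are bounded operators on
`H`, `q ≥ 1`, and the range of `A` has dimension at most `q`, then
`q · a_{2q}(S)² ≤ ∑_i ‖(S - A∘S)(e_i)‖²` (an inequality in `[0,∞]`). -/
theorem statement4 {I : Type*} {H : Type*} [NormedAddCommGroup H]
    [InnerProductSpace ℝ H] [CompleteSpace H] (b : HilbertBasis I ℝ H)
    (S A : H →L[ℝ] H) (q : ℕ) (hq : 1 ≤ q)
    (hA : Module.rank ℝ (LinearMap.range (A : H →ₗ[ℝ] H)) ≤ (q : Cardinal)) :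
    (q : ℝ≥0∞) * ENNReal.ofReal (approxNumber S (2 * q) ^ 2) ≤
      ∑' i, (‖(S - A ∘L S) (b i)‖₊ : ℝ≥0∞) ^ 2 := by
  have hAS : Module.rank ℝ (LinearMap.range ((A ∘L S : H →L[ℝ] H) : H →ₗ[ℝ] H)) ≤ q :=
    (LinearMap.rank_comp_le_left _ _).trans hA
  have hle : approxNumber S (2 * q) ≤ approxNumber (S - A ∘L S) q :=
    calc approxNumber S (2 * q) = approxNumber (A ∘L S + (S - A ∘L S)) (q + q) := by
          rw [add_sub_cancel, two_mul]
      _ ≤ approxNumber (S - A ∘L S) q := approxNumber_add_le hAS hq _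
  calc (q : ℝ≥0∞) * ENNReal.ofReal (approxNumber S (2 * q) ^ 2)
      ≤ q * ENNReal.ofReal (approxNumber (S - A ∘L S) q ^ 2) := by
        gcongr
        exact approxNumber_nonneg S _
    _ ≤ ∑' i, ‖(S - A ∘L S) (b i)‖ₑ ^ 2 := natCast_mul_ofReal_approxNumber_sq_le b _ q
    _ = ∑' i, (‖(S - A ∘L S) (b i)‖₊ : ℝ≥0∞) ^ 2 := by simp only [enorm_eq_nnnorm]
end

section
/- Let H be a real Hilbert space with a Hilbert basis (φ_i)_{i≥1}, let (λ_i)_{i≥1} be a nonincreasing sequence of nonnegative reals tending to 0, and let S be a bounded linear operator on H with S(φ_i) = √(λ_i) φ_i for all i. Let m ≥ 1 and c ≥ 1 be integers and ρ > 0, C > 0 reals, and suppose that for every integer n ≥ 1 there exists a bounded linear operator A_n on H whose range has dimension at most (c n)^m and such that ∑_{i≥1} ‖(S − A_n∘S)(φ_i)‖² ≤ C² n^{-ρ}. Then there exists C' > 0 such that λ_n ≤ C' n^{-(1 + ρ/m)} for every n ≥ 1. -/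
/-!
Let `K` be the range of `A_n`, of dimension `r ≤ (c n)^m`, and `P` the orthogonal projection
onto `K`. Since `A_n S φ_i ∈ K`, best approximation gives
`‖(S - A_n S) φ_i‖² ≥ ‖S φ_i - P S φ_i‖² = λ_i ‖φ_i - P φ_i‖²`, while Bessel's inequality for an
orthonormal basis of `K` gives `∑_{i<2r} ‖P φ_i‖² ≤ r`. As `λ` is nonincreasing,
`r λ_{2r} ≤ ∑_{i<2r} λ_i ‖φ_i - P φ_i‖² ≤ C² n^{-ρ}`, i.e. `λ_{2 c^m n^m} ≲ n^{-(m+ρ)}`; every `N`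
lies between `2 c^m n^m` and `2 c^m (n+1)^m ≤ 2^{m+1} c^m n^m`, so monotonicity gives
`λ_N = O(N^{-(1+ρ/m)})`.
-/

open scoped ENNReal InnerProductSpace

section Projection

variable {𝕜 E ι : Type*} [RCLike 𝕜] [NormedAddCommGroup E] [InnerProductSpace 𝕜 E]

theorem Submodule.norm_sub_starProjection_le (K : Submodule 𝕜 E) [K.HasOrthogonalProjection]
    (u : E) {w : E} (hw : w ∈ K) : ‖u - K.starProjection u‖ ≤ ‖u - w‖ :=
  (K.starProjection_minimal u).trans_le
    (ciInf_le ⟨0, Set.forall_mem_range.2 fun _ => norm_nonneg _⟩ (⟨w, hw⟩ : K))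

theorem Submodule.norm_sub_starProjection_sq (K : Submodule 𝕜 E) [K.HasOrthogonalProjection]
    (u : E) : ‖u - K.starProjection u‖ ^ 2 = ‖u‖ ^ 2 - ‖K.starProjection u‖ ^ 2 := by
  rw [norm_sq_eq_add_norm_sq_starProjection u K, starProjection_orthogonal_val]
  ring

theorem Orthonormal.sum_norm_starProjection_sq_le_finrank {v : ι → E} (hv : Orthonormal 𝕜 v)
    (K : Submodule 𝕜 E) [FiniteDimensional 𝕜 K] (s : Finset ι) :
    ∑ i ∈ s, ‖K.starProjection (v i)‖ ^ 2 ≤ Module.finrank 𝕜 K := by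
  set d := stdOrthonormalBasis 𝕜 K
  have hproj : ∀ x, ‖K.starProjection x‖ ^ 2 = ∑ j, ‖⟪((d j : K) : E), x⟫_𝕜‖ ^ 2 := fun x => by
    rw [K.starProjection_apply, Submodule.norm_coe, ← d.sum_sq_norm_inner_right]
    simp
  calc ∑ i ∈ s, ‖K.starProjection (v i)‖ ^ 2
      = ∑ j, ∑ i ∈ s, ‖⟪v i, ((d j : K) : E)⟫_𝕜‖ ^ 2 := by
        simp_rw [hproj, ← norm_inner_symm (v _)]
        exact Finset.sum_comm
    _ ≤ ∑ j, ‖((d j : K) : E)‖ ^ 2 := Finset.sum_le_sum fun j _ => hv.sum_inner_products_le _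
    _ = Module.finrank 𝕜 K := by
        simp only [Submodule.norm_coe, d.orthonormal.1, one_pow, Finset.sum_const]
        simp

end Projection

theorem sum_norm_sq_le_of_tsum_nnnorm_sq_le {ι F : Type*} [SeminormedAddCommGroup F] {f : ι → F}
    {E : ℝ} (hE : 0 ≤ E) (h : ∑' i, (‖f i‖₊ : ℝ≥0∞) ^ 2 ≤ ENNReal.ofReal E) (s : Finset ι) :
    ∑ i ∈ s, ‖f i‖ ^ 2 ≤ E := by
  have hs := (ENNReal.sum_le_tsum s).trans h
  calc ∑ i ∈ s, ‖f i‖ ^ 2 = (∑ i ∈ s, (‖f i‖₊ : ℝ≥0∞) ^ 2).toReal := by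
        simp [ENNReal.toReal_sum]
    _ ≤ (ENNReal.ofReal E).toReal := ENNReal.toReal_mono ENNReal.ofReal_ne_top hs
    _ = E := ENNReal.toReal_ofReal hE

section Approximation

variable {H : Type*} [NormedAddCommGroup H] [InnerProductSpace ℝ H]
  {b : ℕ → H} {lam : ℕ → ℝ} {S : H →L[ℝ] H}

theorem Orthonormal.sub_finrank_mul_le_sum_norm_sub_comp_sq (hb : Orthonormal ℝ b)
    (hnonneg : ∀ i, 0 ≤ lam i) (hanti : Antitone lam) (hS : ∀ i, S (b i) = √(lam i) • b i)
    (A : H →L[ℝ] H) [FiniteDimensional ℝ (LinearMap.range (A : H →ₗ[ℝ] H))] (N : ℕ) :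
    ((N : ℝ) - Module.finrank ℝ (LinearMap.range (A : H →ₗ[ℝ] H))) * lam N ≤
      ∑ i ∈ Finset.range N, ‖(S - A ∘L S) (b i)‖ ^ 2 := by
  set K := LinearMap.range (A : H →ₗ[ℝ] H)
  have happrox (i : ℕ) :
      lam i * ‖b i - K.starProjection (b i)‖ ^ 2 ≤ ‖(S - A ∘L S) (b i)‖ ^ 2 :=
    calc lam i * ‖b i - K.starProjection (b i)‖ ^ 2
        = ‖S (b i) - K.starProjection (S (b i))‖ ^ 2 := by
          rw [hS, map_smul, ← smul_sub, norm_smul, mul_pow,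
            Real.norm_of_nonneg (Real.sqrt_nonneg _), Real.sq_sqrt (hnonneg i)]
      _ ≤ ‖S (b i) - A (S (b i))‖ ^ 2 := by
          gcongr
          exact K.norm_sub_starProjection_le _ (LinearMap.mem_range_self _ _)
  have hdefect : (N : ℝ) - Module.finrank ℝ K ≤
      ∑ i ∈ Finset.range N, ‖b i - K.starProjection (b i)‖ ^ 2 := by
    simp only [K.norm_sub_starProjection_sq, hb.1, one_pow, Finset.sum_sub_distrib,
      Finset.sum_const, Finset.card_range, nsmul_eq_mul, mul_one]
    linarith [hb.sum_norm_starProjection_sq_le_finrank K (Finset.range N)]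
  calc ((N : ℝ) - Module.finrank ℝ K) * lam N
      ≤ (∑ i ∈ Finset.range N, ‖b i - K.starProjection (b i)‖ ^ 2) * lam N :=
        mul_le_mul_of_nonneg_right hdefect (hnonneg N)
    _ ≤ ∑ i ∈ Finset.range N, lam i * ‖b i - K.starProjection (b i)‖ ^ 2 := by
        rw [Finset.sum_mul]
        refine Finset.sum_le_sum fun i hi => ?_
        rw [mul_comm]
        exact mul_le_mul_of_nonneg_right (hanti (Finset.mem_range.1 hi).le) (sq_nonneg _)
    _ ≤ ∑ i ∈ Finset.range N, ‖(S - A ∘L S) (b i)‖ ^ 2 := Finset.sum_le_sum fun i _ => happrox i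

theorem Orthonormal.mul_two_mul_le_of_rank_range_le (hb : Orthonormal ℝ b)
    (hnonneg : ∀ i, 0 ≤ lam i) (hanti : Antitone lam) (hS : ∀ i, S (b i) = √(lam i) • b i)
    {A : H →L[ℝ] H} {r : ℕ} (hA : Module.rank ℝ (LinearMap.range (A : H →ₗ[ℝ] H)) ≤ r)
    {E : ℝ} (hE : 0 ≤ E)
    (hsum : ∑' i, (‖(S - A ∘L S) (b i)‖₊ : ℝ≥0∞) ^ 2 ≤ ENNReal.ofReal E) :
    r * lam (2 * r) ≤ E := by
  have : FiniteDimensional ℝ (LinearMap.range (A : H →ₗ[ℝ] H)) :=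
    Module.rank_lt_aleph0_iff.1 (hA.trans_lt Cardinal.natCast_lt_aleph0)
  set K := LinearMap.range (A : H →ₗ[ℝ] H)
  have hfin : (Module.finrank ℝ K : ℝ) ≤ r := by
    exact_mod_cast Module.finrank_le_of_rank_le hA
  calc (r : ℝ) * lam (2 * r)
      ≤ (((2 * r : ℕ) : ℝ) - Module.finrank ℝ K) * lam (2 * r) := by
        gcongr
        · exact hnonneg _
        · push_cast; linarith
    _ ≤ _ := hb.sub_finrank_mul_le_sum_norm_sub_comp_sq hnonneg hanti hS A _
    _ ≤ E := sum_norm_sq_le_of_tsum_nnnorm_sq_le hE hsum _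

end Approximation

theorem exists_mul_pow_le_lt_mul_succ_pow {K m : ℕ} (hK : 0 < K) (hm : m ≠ 0) (N : ℕ) :
    ∃ n, K * n ^ m ≤ N ∧ N < K * (n + 1) ^ m := by
  refine ⟨Nat.nthRoot m (N / K), ?_, ?_⟩
  · rw [mul_comm, ← Nat.le_div_iff_mul_le hK]
    exact Nat.pow_nthRoot_le_iff.2 (Or.inl hm)
  · rw [mul_comm, ← Nat.div_lt_iff_lt_mul hK]
    exact Nat.lt_pow_nthRoot_add_one hm _

theorem Antitone.exists_le_mul_rpow_neg_of_pow_mul_le {lam : ℕ → ℝ} (hanti : Antitone lam)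
    (hnonneg : ∀ i, 0 ≤ lam i) {K m : ℕ} (hK : 0 < K) (hm : m ≠ 0) {ρ D : ℝ} (hρ : 0 ≤ ρ)
    (hD : 0 < D)
    (h : ∀ n : ℕ, 1 ≤ n → (n : ℝ) ^ m * lam (K * n ^ m) ≤ D * (n : ℝ) ^ (-ρ)) :
    ∃ C' : ℝ, 0 < C' ∧ ∀ N : ℕ, 1 ≤ N → lam N ≤ C' * (N : ℝ) ^ (-(1 + ρ / m)) := by
  set q : ℝ := 1 + ρ / m
  set B : ℝ := ((2 : ℝ) ^ m * K) ^ q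
  have hq : 0 ≤ q := by positivity
  have hB : 0 < B := by positivity
  refine ⟨(lam 0 + D) * B, mul_pos (add_pos_of_nonneg_of_pos (hnonneg 0) hD) hB, fun N hN => ?_⟩
  rw [Real.rpow_neg N.cast_nonneg, le_mul_inv_iff₀ (Real.rpow_pos_of_pos (by exact_mod_cast hN) _)]
  obtain ⟨n, hlow, hup⟩ := exists_mul_pow_le_lt_mul_succ_pow hK hm N
  rcases Nat.eq_zero_or_pos n with rfl | hn
  · have hNK : (N : ℝ) ≤ 2 ^ m * K := by
      have : N < K := by simpa [zero_pow hm] using hup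
      calc (N : ℝ) ≤ K := by exact_mod_cast this.le
        _ ≤ 2 ^ m * K := le_mul_of_one_le_left K.cast_nonneg (one_le_pow₀ one_le_two)
    calc lam N * (N : ℝ) ^ q ≤ lam 0 * B :=
          mul_le_mul (hanti N.zero_le) (Real.rpow_le_rpow N.cast_nonneg hNK hq) (by positivity)
            (hnonneg 0)
      _ ≤ (lam 0 + D) * B := by gcongr; linarith [hnonneg 0]
  · have hn' : (0 : ℝ) < n := by exact_mod_cast hn
    have hNle : (N : ℝ) ≤ 2 ^ m * K * (n : ℝ) ^ m :=
      calc (N : ℝ) ≤ K * ((n : ℝ) + 1) ^ m := by exact_mod_cast hup.le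
        _ ≤ K * (2 * n) ^ m := by gcongr; linarith [show (1 : ℝ) ≤ n by exact_mod_cast hn]
        _ = 2 ^ m * K * (n : ℝ) ^ m := by ring
    have hNq : (N : ℝ) ^ q ≤ B * ((n : ℝ) ^ m * (n : ℝ) ^ ρ) := by
      have hexp : ((n : ℝ) ^ m) ^ q = (n : ℝ) ^ m * (n : ℝ) ^ ρ := by
        rw [← Real.rpow_natCast, ← Real.rpow_mul hn'.le, mul_add, mul_one,
          mul_div_cancel₀ _ (by exact_mod_cast hm), Real.rpow_add hn']
      calc (N : ℝ) ^ q ≤ (2 ^ m * K * (n : ℝ) ^ m) ^ q :=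
            Real.rpow_le_rpow N.cast_nonneg hNle hq
        _ = B * ((n : ℝ) ^ m * (n : ℝ) ^ ρ) := by
            rw [Real.mul_rpow (by positivity) (by positivity), hexp]
    have hlam : (n : ℝ) ^ m * lam N ≤ D * (n : ℝ) ^ (-ρ) :=
      (mul_le_mul_of_nonneg_left (hanti hlow) (by positivity)).trans (h n hn)
    calc lam N * (N : ℝ) ^ q ≤ lam N * (B * ((n : ℝ) ^ m * (n : ℝ) ^ ρ)) :=
          mul_le_mul_of_nonneg_left hNq (hnonneg N)
      _ = B * ((n : ℝ) ^ m * lam N) * (n : ℝ) ^ ρ := by ring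
      _ ≤ B * (D * (n : ℝ) ^ (-ρ)) * (n : ℝ) ^ ρ := by gcongr
      _ = D * B := by rw [Real.rpow_neg hn'.le]; field_simp
      _ ≤ (lam 0 + D) * B := by gcongr; linarith [hnonneg 0]

theorem statement6_general {H : Type*} [NormedAddCommGroup H] [InnerProductSpace ℝ H]
    (b : HilbertBasis ℕ ℝ H)
    (lam : ℕ → ℝ) (hnonneg : ∀ i, 0 ≤ lam i) (hanti : Antitone lam)
    (S : H →L[ℝ] H) (hS : ∀ i, S (b i) = Real.sqrt (lam i) • b i)
    (m c : ℕ) (hm : 1 ≤ m) (hc : 1 ≤ c) (ρ C : ℝ) (hρ : 0 < ρ) (hC : 0 < C)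
    (hA : ∀ n : ℕ, 1 ≤ n → ∃ A : H →L[ℝ] H,
      Module.rank ℝ (LinearMap.range (A : H →ₗ[ℝ] H)) ≤ (((c * n) ^ m : ℕ) : Cardinal) ∧
      ∑' i, (‖(S - A ∘L S) (b i)‖₊ : ℝ≥0∞) ^ 2 ≤
        ENNReal.ofReal (C ^ 2 * (n : ℝ) ^ (-ρ))) :
    ∃ C' : ℝ, 0 < C' ∧ ∀ n : ℕ, 1 ≤ n →
      lam n ≤ C' * (n : ℝ) ^ (-(1 + ρ / (m : ℝ))) := by
  refine hanti.exists_le_mul_rpow_neg_of_pow_mul_le hnonneg (K := 2 * c ^ m) (D := C ^ 2)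
    (by positivity) (by omega) hρ.le (by positivity) fun n hn => ?_
  obtain ⟨A, hrank, hsum⟩ := hA n hn
  have hkey := b.orthonormal.mul_two_mul_le_of_rank_range_le hnonneg hanti hS hrank
    (by positivity) hsum
  have hpow : (n : ℝ) ^ m ≤ (((c * n) ^ m : ℕ) : ℝ) := by
    push_cast
    gcongr
    exact le_mul_of_one_le_left n.cast_nonneg (by exact_mod_cast hc)
  calc (n : ℝ) ^ m * lam (2 * c ^ m * n ^ m)
      ≤ (((c * n) ^ m : ℕ) : ℝ) * lam (2 * (c * n) ^ m) := by
        rw [show 2 * c ^ m * n ^ m = 2 * (c * n) ^ m by ring]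
        exact mul_le_mul_of_nonneg_right hpow (hnonneg _)
    _ ≤ C ^ 2 * (n : ℝ) ^ (-ρ) := hkey

/-- Let `(φ_i)` be a Hilbert basis of the real Hilbert space `H`, `(λ_i)` a
nonincreasing sequence of nonnegative reals tending to `0`, and `S` a bounded operator with
`S φ_i = √λ_i φ_i`.  If for every `n ≥ 1` there is a bounded operator `A_n` whose range has
dimension at most `(c n)^m` with `∑_i ‖(S - A_n ∘ S)(φ_i)‖² ≤ C² n^{-ρ}`, then
`λ_n ≤ C' n^{-(1+ρ/m)}` for all `n ≥ 1` and some `C' > 0`. -/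
theorem statement6 {H : Type*} [NormedAddCommGroup H] [InnerProductSpace ℝ H]
    [CompleteSpace H] (b : HilbertBasis ℕ ℝ H)
    (lam : ℕ → ℝ) (hnonneg : ∀ i, 0 ≤ lam i) (hanti : Antitone lam)
    (hlim : Filter.Tendsto lam Filter.atTop (nhds 0))
    (S : H →L[ℝ] H) (hS : ∀ i, S (b i) = Real.sqrt (lam i) • b i)
    (m c : ℕ) (hm : 1 ≤ m) (hc : 1 ≤ c) (ρ C : ℝ) (hρ : 0 < ρ) (hC : 0 < C)
    (hA : ∀ n : ℕ, 1 ≤ n → ∃ A : H →L[ℝ] H,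
      Module.rank ℝ (LinearMap.range (A : H →ₗ[ℝ] H)) ≤ (((c * n) ^ m : ℕ) : Cardinal) ∧
      ∑' i, (‖(S - A ∘L S) (b i)‖₊ : ℝ≥0∞) ^ 2 ≤
        ENNReal.ofReal (C ^ 2 * (n : ℝ) ^ (-ρ))) :
    ∃ C' : ℝ, 0 < C' ∧ ∀ n : ℕ, 1 ≤ n →
      lam n ≤ C' * (n : ℝ) ^ (-(1 + ρ / (m : ℝ))) :=
  statement6_general b lam hnonneg hanti S hS m c hm hc ρ C hρ hC hA
end

section
/- Let H be a real Hilbert space with a Hilbert basis (φ_i)_{i≥1}, let (λ_i)_{i≥1} be a nonincreasing sequence of positive reals tending to 0, and let S be a bounded linear operator on H with S(φ_i) = √(λ_i) φ_i for all i. Let m ≥ 1 and c ≥ 1 be integers and ρ > 0, C > 0 reals, and suppose that for every integer n ≥ 1 there exists a bounded linear operator A_n on H whose range has dimension at most (c n)^m and such that ∑_{i≥1} ‖(S − A_n∘S)(φ_i)‖² ≤ C² n^{-ρ}. Let A be the ellipsoid associated with (φ_i) and (λ_i). Then there exists C'' > 0 such that the Kolmogorov n-width satisfies d_n(A;H) ≤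 C'' (n+1)^{-(1/2 + ρ/(2m))} for every n ≥ 0. -/
open scoped ENNReal BigOperators

/-- The Kolmogorov `n`-width of a subset `A` of a real Hilbert space `H`:
the infimum, over all subspaces `V ⊆ H` of dimension at most `n`, of
`sup_{f ∈ A} inf_{g ∈ V} ‖f - g‖`. -/
noncomputable def kolmogorovWidth {H : Type*} [NormedAddCommGroup H]
    [InnerProductSpace ℝ H] (A : Set H) (n : ℕ) : ℝ :=
  ⨅ V : {V : Submodule ℝ H // Module.rank ℝ V ≤ n},
    sSup ((fun f => sInf ((fun g => ‖f - g‖) '' {g | g ∈ (V : Submodule ℝ H)})) '' A)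

/-- The ellipsoid associated with an orthonormal sequence `(φ_i)` and a sequence `(λ_i)`:
`{∑ a_i √λ_i φ_i : ∑ a_i² ≤ 1}`. -/
def ellipsoid {H : Type*} [NormedAddCommGroup H] [InnerProductSpace ℝ H]
    (φ : ℕ → H) (lam : ℕ → ℝ) : Set H :=
  {f | ∃ a : ℕ → ℝ, Summable (fun i => (a i) ^ 2) ∧ (∑' i, (a i) ^ 2) ≤ 1 ∧
    HasSum (fun i => (a i * Real.sqrt (lam i)) • φ i) f}

set_option maxHeartbeats 1000000
set_option synthInstance.maxHeartbeats 200000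

section aux
open scoped RealInnerProductSpace

variable {H : Type*} [NormedAddCommGroup H] [InnerProductSpace ℝ H] [CompleteSpace H]

lemma width_le_sqrt (b : HilbertBasis ℕ ℝ H) (lam : ℕ → ℝ) (h0 : ∀ i, 0 ≤ lam i)
    (hanti : Antitone lam) (n : ℕ) :
    kolmogorovWidth (ellipsoid (fun i => b i) lam) n ≤ Real.sqrt (lam n) := by
  classical
  set A := ellipsoid (fun i => b i) lam
  set V : Submodule ℝ H :=
    Submodule.span ℝ (((Finset.range n).image (fun i => (b i : H)) : Finset H) : Set H) with hV
  have hrank : Module.rank ℝ V ≤ n := by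
    refine (rank_span_finset_le _).trans ?_
    have : ((Finset.range n).image (fun i => (b i : H))).card ≤ n :=
      (Finset.card_image_le).trans (le_of_eq (Finset.card_range n))
    exact_mod_cast Nat.cast_le.mpr this
  have hinner_nonneg : ∀ (W : {V : Submodule ℝ H // Module.rank ℝ V ≤ n}),
      0 ≤ sSup ((fun f => sInf ((fun g => ‖f - g‖) '' {g | g ∈ (W : Submodule ℝ H)})) '' A) := by
    intro W
    refine Real.sSup_nonneg ?_
    rintro _ ⟨f, _, rfl⟩
    refine Real.sInf_nonneg ?_
    rintro _ ⟨g, _, rfl⟩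
    exact norm_nonneg _
  have hbdd : BddBelow (Set.range fun (W : {V : Submodule ℝ H // Module.rank ℝ V ≤ n}) =>
      sSup ((fun f => sInf ((fun g => ‖f - g‖) '' {g | g ∈ (W : Submodule ℝ H)})) '' A)) :=
    ⟨0, by rintro x ⟨W, rfl⟩; exact hinner_nonneg W⟩
  refine (ciInf_le hbdd ⟨V, hrank⟩).trans ?_
  refine Real.sSup_le ?_ (Real.sqrt_nonneg _)
  rintro _ ⟨f, hf, rfl⟩
  obtain ⟨a, hsummable, hle1, hsum⟩ := hf
  set cfun : ℕ → ℝ := fun i => a i * Real.sqrt (lam i) with hc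
  set g : H := ∑ j ∈ Finset.range n, cfun j • b j with hg
  have hgV : g ∈ V := by
    refine Submodule.sum_mem _ fun j hj => Submodule.smul_mem _ _ ?_
    exact Submodule.subset_span (Finset.mem_coe.mpr (Finset.mem_image_of_mem _ hj))
  have horth := orthonormal_iff_ite.mp b.orthonormal
  -- coefficient of f
  have hcoef : ∀ i, ⟪b i, f⟫ = cfun i := by
    intro i
    have h1 : HasSum (fun j => ⟪b i, cfun j • b j⟫) ⟪b i, f⟫ :=
      hsum.mapL (innerSL ℝ (b i))
    have h2 : (fun j => ⟪b i, cfun j • (b j : H)⟫) = fun j => if j = i then cfun i else 0 := by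
      funext j
      rw [real_inner_smul_right, horth]
      by_cases h : i = j
      · subst h; simp
      · simp [h, Ne.symm h]
    rw [h2] at h1
    exact h1.unique (hasSum_ite_eq i (cfun i))
  have hcoefg : ∀ i, ⟪b i, g⟫ = if i < n then cfun i else 0 := by
    intro i
    rw [hg, inner_sum]
    simp only [real_inner_smul_right, horth]
    rw [Finset.sum_congr rfl (fun j hj => by rw [eq_comm])]
    simp [Finset.sum_ite_eq', Finset.mem_range]
  have hcoefd : ∀ i, ⟪f - g, b i⟫ = if i < n then 0 else cfun i := by
    intro i
    rw [real_inner_comm, inner_sub_right, hcoef, hcoefg]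
    by_cases h : i < n <;> simp [h]
  -- Parseval
  have hp := b.hasSum_inner_mul_inner (f - g) (f - g)
  have hterm : (fun i => ⟪f - g, b i⟫ * ⟪b i, f - g⟫)
      = fun i => (if i < n then 0 else cfun i) ^ 2 := by
    funext i
    rw [real_inner_comm (f - g) (b i), hcoefd, sq]
  rw [hterm, real_inner_self_eq_norm_sq] at hp
  have hnormsq : ‖f - g‖ ^ 2 ≤ lam n := by
    have hsum2 : Summable (fun i => lam n * a i ^ 2) := hsummable.mul_left _
    have hle : ∀ i, (if i < n then (0:ℝ) else cfun i) ^ 2 ≤ lam n * a i ^ 2 := by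
      intro i
      by_cases h : i < n
      · simp only [h, if_true]
        simpa using mul_nonneg (h0 n) (sq_nonneg (a i))
      · simp only [h, if_false, hc]
        rw [mul_pow, Real.sq_sqrt (h0 i)]
        have : lam i ≤ lam n := hanti (le_of_not_gt h)
        nlinarith [sq_nonneg (a i), h0 i]
    calc ‖f - g‖ ^ 2 = ∑' i, (if i < n then (0:ℝ) else cfun i) ^ 2 := hp.tsum_eq.symm
      _ ≤ ∑' i, lam n * a i ^ 2 := Summable.tsum_le_tsum hle hp.summable hsum2
      _ = lam n * ∑' i, a i ^ 2 := by rw [tsum_mul_left]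
      _ ≤ lam n * 1 := by
          have := h0 n
          nlinarith [hle1]
      _ = lam n := mul_one _
  have hfg : ‖f - g‖ ≤ Real.sqrt (lam n) := by
    rw [← Real.sqrt_sq (norm_nonneg (f - g))]
    exact Real.sqrt_le_sqrt hnormsq
  refine le_trans ?_ hfg
  have hb0 : BddBelow ((fun g' : H => ‖f - g'‖) '' {g' | g' ∈ V}) := by
    refine ⟨0, ?_⟩
    rintro x ⟨g', _, rfl⟩
    exact norm_nonneg _
  exact csInf_le hb0 ⟨g, hgV, rfl⟩


lemma bessel_finset (b : HilbertBasis ℕ ℝ H) (x : H) (F : Finset ℕ) :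
    ∑ i ∈ F, ⟪x, b i⟫ ^ 2 ≤ ‖x‖ ^ 2 := by
  have hp := b.hasSum_inner_mul_inner x x
  have hterm : (fun i => ⟪x, b i⟫ * ⟪b i, x⟫) = fun i => ⟪x, b i⟫ ^ 2 := by
    funext i; rw [real_inner_comm x (b i), sq]
  rw [hterm, real_inner_self_eq_norm_sq] at hp
  exact sum_le_hasSum F (fun i _ => sq_nonneg _) hp


lemma sum_proj_sq_le (b : HilbertBasis ℕ ℝ H) (K : Submodule ℝ H) [FiniteDimensional ℝ K]
    (N : ℕ) :
    ∑ i ∈ Finset.range N, ‖(K.orthogonalProjectionOnto (b i) : H)‖ ^ 2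
      ≤ (Module.finrank ℝ K : ℝ) := by
  set v := stdOrthonormalBasis ℝ K
  have hPx : ∀ x : H, ‖(K.orthogonalProjectionOnto x : H)‖ ^ 2
      = ∑ j, ⟪((v j : K) : H), x⟫ ^ 2 := by
    intro x
    have h1 : ∀ j, ⟪(v j : K), K.orthogonalProjectionOnto x⟫ = ⟪((v j : K) : H), x⟫ :=
      fun j => Submodule.inner_orthogonalProjectionOnto_eq_of_mem_left (K := K) (v j) x
    have h2 := v.sum_inner_mul_inner (K.orthogonalProjectionOnto x) (K.orthogonalProjectionOnto x)
    have h3 : ⟪K.orthogonalProjectionOnto x, K.orthogonalProjectionOnto x⟫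
        = ‖(K.orthogonalProjectionOnto x : H)‖ ^ 2 := by
      rw [real_inner_self_eq_norm_sq, ← Submodule.norm_coe]
    rw [h3] at h2
    rw [← h2]
    refine Finset.sum_congr rfl fun j _ => ?_
    rw [real_inner_comm (v j) (K.orthogonalProjectionOnto x), h1 j, sq]
  calc ∑ i ∈ Finset.range N, ‖(K.orthogonalProjectionOnto (b i) : H)‖ ^ 2
      = ∑ i ∈ Finset.range N, ∑ j, ⟪((v j : K) : H), (b i : H)⟫ ^ 2 := by
        exact Finset.sum_congr rfl fun i _ => hPx (b i)
    _ = ∑ j, ∑ i ∈ Finset.range N, ⟪((v j : K) : H), (b i : H)⟫ ^ 2 := Finset.sum_comm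
    _ ≤ ∑ j : Fin (Module.finrank ℝ K), (1:ℝ) := by
        refine Finset.sum_le_sum fun j _ => ?_
        have := bessel_finset b ((v j : K) : H) (Finset.range N)
        have hn : ‖((v j : K) : H)‖ = 1 := by
          exact (Submodule.norm_coe _).trans (v.orthonormal.1 j)
        rw [hn] at this; simpa using this
    _ = (Module.finrank ℝ K : ℝ) := by simp


lemma key_bound (b : HilbertBasis ℕ ℝ H) (lam : ℕ → ℝ) (hpos : ∀ i, 0 < lam i)
    (hanti : Antitone lam)
    (S : H →L[ℝ] H) (hS : ∀ i, S (b i) = Real.sqrt (lam i) • b i)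
    (A : H →L[ℝ] H) (r : ℕ) (hr : 1 ≤ r)
    (hrank : Module.rank ℝ (LinearMap.range (A : H →ₗ[ℝ] H)) ≤ (r : Cardinal))
    (B : ℝ) (hB : 0 ≤ B)
    (hsum : ∑' i, (‖(S - A ∘L S) (b i)‖₊ : ℝ≥0∞) ^ 2 ≤ ENNReal.ofReal B) :
    lam (2 * r - 1) * r ≤ B := by
  set K : Submodule ℝ H := LinearMap.range (A : H →ₗ[ℝ] H) with hK
  haveI : FiniteDimensional ℝ K :=
    Module.rank_lt_aleph0_iff.mp (hrank.trans_lt (Cardinal.nat_lt_aleph0 r))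
  haveI : CompleteSpace K := FiniteDimensional.complete ℝ _
  set P := K.orthogonalProjectionOnto with hP
  have hfr : (Module.finrank ℝ K : ℝ) ≤ (r : ℝ) := by
    exact_mod_cast Module.finrank_le_of_rank_le hrank
  have hbnorm : ∀ i, ‖(b i : H)‖ = 1 := fun i => b.orthonormal.1 i
  -- step 1
  have step1 : ∀ i, lam i * (1 - ‖(P (b i) : H)‖ ^ 2) ≤ ‖(S - A ∘L S) (b i)‖ ^ 2 := by
    intro i
    set u := S (b i) with hu
    have hmem : A u ∈ K := LinearMap.mem_range_self _ u
    have hmin : ‖u - P u‖ ≤ ‖u - A u‖ := by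
      rw [hP, ← Submodule.starProjection_apply, Submodule.starProjection_minimal]
      have hb0 : BddBelow (Set.range fun x : K => ‖u - (x : H)‖) :=
        ⟨0, by rintro y ⟨x, rfl⟩; exact norm_nonneg _⟩
      exact ciInf_le hb0 (⟨A u, hmem⟩ : K)
    have hpyth : ‖u‖ ^ 2 = ‖(P u : H)‖ ^ 2 + ‖u - (P u : H)‖ ^ 2 := by
      have h1 := Submodule.norm_sq_eq_add_norm_sq_projection u K
      have h2 : ‖(Kᗮ.orthogonalProjectionOnto u : H)‖ = ‖u - (P u : H)‖ := by
        rw [Submodule.orthogonalProjectionOnto_orthogonal]; rfl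
      have h3 : ‖Kᗮ.orthogonalProjectionOnto u‖ = ‖(Kᗮ.orthogonalProjectionOnto u : H)‖ :=
        (Submodule.norm_coe _).symm
      have h4 : ‖K.orthogonalProjectionOnto u‖ = ‖(P u : H)‖ := (Submodule.norm_coe _).symm
      rw [h4, h3, h2] at h1
      exact h1
    have hunorm : ‖u‖ ^ 2 = lam i := by
      rw [hu, hS i, norm_smul, hbnorm i, Real.norm_eq_abs,
        abs_of_nonneg (Real.sqrt_nonneg _), mul_one, Real.sq_sqrt (hpos i).le]
    have hPu : (P u : H) = Real.sqrt (lam i) • (P (b i) : H) := by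
      rw [hu, hS i, map_smul]
      rfl
    have hPunorm : ‖(P u : H)‖ ^ 2 = lam i * ‖(P (b i) : H)‖ ^ 2 := by
      rw [hPu, norm_smul, Real.norm_eq_abs, abs_of_nonneg (Real.sqrt_nonneg _),
        mul_pow, Real.sq_sqrt (hpos i).le]
    have happly : (S - A ∘L S) (b i) = u - A u := by
      simp [hu, ContinuousLinearMap.sub_apply]
    rw [happly]
    have h5 : ‖u - (P u : H)‖ ^ 2 = lam i * (1 - ‖(P (b i) : H)‖ ^ 2) := by
      have := hpyth
      rw [hunorm, hPunorm] at this
      ring_nf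
      ring_nf at this
      linarith
    rw [← h5]
    have := hmin
    nlinarith [norm_nonneg (u - (P u : H)), norm_nonneg (u - A u)]
  -- step 2
  have step2 : ∑ i ∈ Finset.range (2 * r), ‖(S - A ∘L S) (b i)‖ ^ 2 ≤ B := by
    rw [← ENNReal.ofReal_le_ofReal_iff hB]
    calc ENNReal.ofReal (∑ i ∈ Finset.range (2 * r), ‖(S - A ∘L S) (b i)‖ ^ 2)
        = ∑ i ∈ Finset.range (2 * r), ENNReal.ofReal (‖(S - A ∘L S) (b i)‖ ^ 2) :=
          ENNReal.ofReal_sum_of_nonneg fun i _ => sq_nonneg _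
      _ = ∑ i ∈ Finset.range (2 * r), (‖(S - A ∘L S) (b i)‖₊ : ℝ≥0∞) ^ 2 := by
          refine Finset.sum_congr rfl fun i _ => ?_
          rw [ENNReal.ofReal_pow (norm_nonneg _)]; exact congrArg (· ^ 2) (ofReal_norm _)
      _ ≤ ∑' i, (‖(S - A ∘L S) (b i)‖₊ : ℝ≥0∞) ^ 2 := ENNReal.sum_le_tsum _
      _ ≤ ENNReal.ofReal B := hsum
  -- step 3
  have hproj1 : ∀ i, ‖(P (b i) : H)‖ ^ 2 ≤ 1 := by
    intro i
    have h1 : ‖P (b i)‖ ≤ ‖(P : H →L[ℝ] K)‖ * ‖b i‖ := (P : H →L[ℝ] K).le_opNorm _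
    have h2 : ‖(P : H →L[ℝ] K)‖ ≤ 1 := Submodule.orthogonalProjectionOnto_norm_le K
    have h3 : ‖(P (b i) : H)‖ = ‖P (b i)‖ := Submodule.norm_coe _
    rw [hbnorm i, mul_one] at h1
    rw [h3]
    nlinarith [norm_nonneg (P (b i))]
  have step3 : lam (2 * r - 1) * (r : ℝ) ≤
      ∑ i ∈ Finset.range (2 * r), lam i * (1 - ‖(P (b i) : H)‖ ^ 2) := by
    have hsum1 : (r : ℝ) ≤ ∑ i ∈ Finset.range (2 * r), (1 - ‖(P (b i) : H)‖ ^ 2) := by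
      have hps := sum_proj_sq_le b K (2 * r)
      rw [Finset.sum_sub_distrib, Finset.sum_const, Finset.card_range, nsmul_eq_mul]
      push_cast
      linarith [hps, hfr]
    calc lam (2 * r - 1) * (r : ℝ)
        ≤ lam (2 * r - 1) * ∑ i ∈ Finset.range (2 * r), (1 - ‖(P (b i) : H)‖ ^ 2) := by
          exact mul_le_mul_of_nonneg_left hsum1 (hpos _).le
      _ = ∑ i ∈ Finset.range (2 * r), lam (2 * r - 1) * (1 - ‖(P (b i) : H)‖ ^ 2) := by
          rw [Finset.mul_sum]
      _ ≤ ∑ i ∈ Finset.range (2 * r), lam i * (1 - ‖(P (b i) : H)‖ ^ 2) := by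
          refine Finset.sum_le_sum fun i hi => ?_
          have hi' : i ≤ 2 * r - 1 := Nat.le_pred_of_lt (Finset.mem_range.mp hi)
          have := hanti hi'
          nlinarith [hproj1 i]
  calc lam (2 * r - 1) * (r : ℝ)
      ≤ ∑ i ∈ Finset.range (2 * r), lam i * (1 - ‖(P (b i) : H)‖ ^ 2) := step3
    _ ≤ ∑ i ∈ Finset.range (2 * r), ‖(S - A ∘L S) (b i)‖ ^ 2 :=
        Finset.sum_le_sum fun i _ => step1 i
    _ ≤ B := step2


lemma lam_pointwise (lam : ℕ → ℝ) (hpos : ∀ i, 0 < lam i) (hanti : Antitone lam)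
    (m c : ℕ) (hm : 1 ≤ m) (hc : 1 ≤ c) (ρ C : ℝ) (hρ : 0 < ρ) (hC : 0 < C)
    (key : ∀ n : ℕ, 1 ≤ n →
      lam (2 * (c * n) ^ m - 1) * (((c * n) ^ m : ℕ) : ℝ) ≤ C ^ 2 * (n : ℝ) ^ (-ρ)) :
    ∃ D : ℝ, 0 < D ∧ ∀ k : ℕ,
      lam k ≤ D * ((k : ℝ) + 1) ^ (-(1 + ρ / (m : ℝ))) := by
  have hm0 : (m : ℝ) ≠ 0 := by positivity
  have hmpos : (0:ℝ) < m := by positivity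
  have hcpos : (0:ℝ) < c := by exact_mod_cast hc
  set α : ℝ := 1 + ρ / (m : ℝ) with hα
  have hαpos : 0 < α := by positivity
  set E : ℝ := 2 ^ (m + 1) * (c : ℝ) ^ m with hE
  have hEpos : 0 < E := by positivity
  set D₁ : ℝ := C ^ 2 * 2 ^ (m + 1) * E ^ (ρ / (m : ℝ)) with hD₁
  have hD₁pos : 0 < D₁ := by positivity
  set D₂ : ℝ := lam 0 * (2 * (c : ℝ) ^ m) ^ α with hD₂
  have hD₂pos : 0 < D₂ := by
    have := hpos 0
    positivity
  refine ⟨max D₁ D₂, lt_max_of_lt_right hD₂pos, fun k => ?_⟩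
  set kk : ℝ := (k : ℝ) + 1 with hkk
  have hkk1 : 1 ≤ kk := by simp [hkk]
  have hkkpos : 0 < kk := lt_of_lt_of_le one_pos hkk1
  have hkkα : 0 < kk ^ (-α) := Real.rpow_pos_of_pos hkkpos _
  by_cases hsmall : kk < 2 * (c : ℝ) ^ m
  · have h1 : (2 * (c : ℝ) ^ m) ^ (-α) ≤ kk ^ (-α) :=
      Real.rpow_le_rpow_of_nonpos hkkpos hsmall.le (by linarith)
    have h2 : lam k ≤ lam 0 := hanti (Nat.zero_le k)
    have h3 : D₂ * (2 * (c : ℝ) ^ m) ^ (-α) = lam 0 := by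
      rw [hD₂, mul_assoc, ← Real.rpow_add (by positivity), add_neg_cancel, Real.rpow_zero,
        mul_one]
    calc lam k ≤ lam 0 := h2
      _ = D₂ * (2 * (c : ℝ) ^ m) ^ (-α) := h3.symm
      _ ≤ D₂ * kk ^ (-α) := by
          exact mul_le_mul_of_nonneg_left h1 hD₂pos.le
      _ ≤ max D₁ D₂ * kk ^ (-α) := by
          exact mul_le_mul_of_nonneg_right (le_max_right _ _) hkkα.le
  · push_neg at hsmall
    set y : ℝ := kk / (2 * (c : ℝ) ^ m) with hy
    have hy1 : 1 ≤ y := (one_le_div (by positivity)).mpr hsmall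
    set x : ℝ := y ^ ((m : ℝ)⁻¹) with hx
    have hx1 : 1 ≤ x := Real.one_le_rpow hy1 (by positivity)
    have hx0 : 0 ≤ x := by linarith
    set n : ℕ := ⌊x⌋₊ with hn
    have hn1 : 1 ≤ n := Nat.le_floor (by exact_mod_cast hx1)
    have hnpos : (0:ℝ) < n := by exact_mod_cast hn1
    have hxm : x ^ m = y := by
      rw [hx, ← Real.rpow_natCast (y ^ ((m:ℝ)⁻¹)) m, ← Real.rpow_mul (by linarith),
        inv_mul_cancel₀ hm0, Real.rpow_one]
    have hnm : (n : ℝ) ^ m ≤ y := by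
      calc (n : ℝ) ^ m ≤ x ^ m := pow_le_pow_left₀ (by positivity) (Nat.floor_le hx0) m
        _ = y := hxm
    have h2cn : 2 * (c : ℝ) ^ m * (n : ℝ) ^ m ≤ kk := by
      have : y * (2 * (c : ℝ) ^ m) = kk := by
        rw [hy]; exact div_mul_cancel₀ _ (by positivity)
      nlinarith [hnm]
    have hup : x < (n : ℝ) + 1 := Nat.lt_floor_add_one x
    have hylt : y < ((n : ℝ) + 1) ^ m := by
      rw [← hxm]
      exact pow_lt_pow_left₀ hup hx0 (by omega)
    have hn2 : ((n : ℝ) + 1) ^ m ≤ (2 * n) ^ m := by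
      refine pow_le_pow_left₀ (by positivity) ?_ m
      have h1' : (1:ℝ) ≤ (n:ℝ) := by exact_mod_cast hn1
      push_cast
      linarith
    have hlow : kk < E * (n : ℝ) ^ m := by
      have hyk : y * (2 * (c : ℝ) ^ m) = kk := by rw [hy]; exact div_mul_cancel₀ _ (by positivity)
      have : y < 2 ^ m * (n : ℝ) ^ m := by
        calc y < ((n : ℝ) + 1) ^ m := hylt
          _ ≤ (2 * n) ^ m := hn2
          _ = 2 ^ m * (n : ℝ) ^ m := mul_pow 2 _ m
      have h2c : (0:ℝ) < 2 * (c : ℝ) ^ m := by positivity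
      calc kk = y * (2 * (c : ℝ) ^ m) := hyk.symm
        _ < 2 ^ m * (n : ℝ) ^ m * (2 * (c : ℝ) ^ m) := by
            exact mul_lt_mul_of_pos_right this h2c
        _ = E * (n : ℝ) ^ m := by rw [hE]; ring
    -- apply key
    have hkey := key n hn1
    have hcast : (((c * n) ^ m : ℕ) : ℝ) = (c : ℝ) ^ m * (n : ℝ) ^ m := by
      push_cast; rw [mul_pow]
    have hlamle : lam k ≤ lam (2 * (c * n) ^ m - 1) := by
      refine hanti ?_
      have h1 : 2 * (c * n) ^ m ≤ k + 1 := by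
        have h2 : ((2 * (c * n) ^ m : ℕ) : ℝ) ≤ ((k : ℝ) + 1) := by
          push_cast
          rw [mul_pow]
          calc 2 * ((c:ℝ) ^ m * (n:ℝ) ^ m) = 2 * (c:ℝ) ^ m * (n:ℝ) ^ m := by ring
            _ ≤ kk := h2cn
            _ = (k : ℝ) + 1 := hkk
        exact_mod_cast h2
      omega
    have hmain : lam k * ((c : ℝ) ^ m * (n : ℝ) ^ m) ≤ C ^ 2 * (n : ℝ) ^ (-ρ) := by
      calc lam k * ((c : ℝ) ^ m * (n : ℝ) ^ m)
          ≤ lam (2 * (c * n) ^ m - 1) * ((c : ℝ) ^ m * (n : ℝ) ^ m) := by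
            exact mul_le_mul_of_nonneg_right hlamle (by positivity)
        _ ≤ C ^ 2 * (n : ℝ) ^ (-ρ) := by rw [← hcast]; exact hkey
    -- bound n^(-ρ)
    have hnmge : kk / E ≤ (n : ℝ) ^ m := by
      rw [div_le_iff₀ hEpos]
      nlinarith [hlow]
    have hnρ : (n : ℝ) ^ (-ρ) ≤ kk ^ (-(ρ / (m:ℝ))) * E ^ (ρ / (m:ℝ)) := by
      have h1 : (n : ℝ) ^ (-ρ) = ((n : ℝ) ^ m) ^ (-(ρ / (m:ℝ))) := by
        rw [← Real.rpow_natCast (n : ℝ) m, ← Real.rpow_mul (le_of_lt hnpos)]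
        congr 1
        field_simp
      have h2 : ((n : ℝ) ^ m) ^ (-(ρ / (m:ℝ))) ≤ (kk / E) ^ (-(ρ / (m:ℝ))) := by
        refine Real.rpow_le_rpow_of_nonpos (by positivity) hnmge (neg_nonpos.mpr (by positivity))
      have h3 : (kk / E) ^ (-(ρ / (m:ℝ))) = kk ^ (-(ρ / (m:ℝ))) * E ^ (ρ / (m:ℝ)) := by
        rw [Real.div_rpow hkkpos.le hEpos.le, div_eq_mul_inv,
          ← Real.rpow_neg hEpos.le, neg_neg]
      rw [h1]
      rw [h3] at h2
      exact h2
    -- combine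
    have hfin : lam k * kk ≤ D₁ * kk ^ (-(ρ / (m:ℝ))) := by
      have h1 : lam k * kk ≤ lam k * (E * (n : ℝ) ^ m) := by
        exact mul_le_mul_of_nonneg_left hlow.le (hpos k).le
      have h2 : lam k * (E * (n : ℝ) ^ m)
          = 2 ^ (m+1) * (lam k * ((c : ℝ) ^ m * (n:ℝ) ^ m)) := by
        rw [hE]; ring
      have h3 : (2:ℝ) ^ (m+1) * (lam k * ((c : ℝ) ^ m * (n:ℝ) ^ m))
          ≤ 2 ^ (m+1) * (C ^ 2 * (n : ℝ) ^ (-ρ)) := by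
        exact mul_le_mul_of_nonneg_left hmain (by positivity)
      have h4 : (2:ℝ) ^ (m+1) * (C ^ 2 * (n : ℝ) ^ (-ρ))
          ≤ 2 ^ (m+1) * (C ^ 2 * (kk ^ (-(ρ / (m:ℝ))) * E ^ (ρ / (m:ℝ)))) := by
        refine mul_le_mul_of_nonneg_left (mul_le_mul_of_nonneg_left hnρ (by positivity))
          (by positivity)
      calc lam k * kk ≤ 2 ^ (m+1) * (C ^ 2 * (kk ^ (-(ρ / (m:ℝ))) * E ^ (ρ / (m:ℝ)))) :=
            le_trans h1 (le_trans (le_of_eq h2) (le_trans h3 h4))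
        _ = D₁ * kk ^ (-(ρ / (m:ℝ))) := by rw [hD₁]; ring
    have hsplit : kk ^ (-α) = kk ^ (-(ρ / (m:ℝ))) * kk⁻¹ := by
      rw [hα, ← Real.rpow_neg_one kk, ← Real.rpow_add hkkpos]
      congr 1
      ring
    calc lam k = lam k * kk * kk⁻¹ := by field_simp
      _ ≤ D₁ * kk ^ (-(ρ / (m:ℝ))) * kk⁻¹ := by
          refine mul_le_mul_of_nonneg_right hfin (by positivity)
      _ = D₁ * kk ^ (-α) := by rw [hsplit]; ring
      _ ≤ max D₁ D₂ * kk ^ (-α) := mul_le_mul_of_nonneg_right (le_max_left _ _) hkkα.le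


end aux

/-- Let `(φ_i)` be a Hilbert basis of the real Hilbert space `H`, `(λ_i)` a
nonincreasing sequence of positive reals tending to `0`, `S` a bounded operator with
`S φ_i = √λ_i φ_i`, and suppose for every `n ≥ 1` there is a bounded operator `A_n` whose
range has dimension at most `(c n)^m` with `∑_i ‖(S - A_n ∘ S)(φ_i)‖² ≤ C² n^{-ρ}`.  Then the
Kolmogorov `n`-width of the associated ellipsoid `A` satisfies
`d_n(A; H) ≤ C'' (n+1)^{-(1/2 + ρ/(2m))}` for every `n ≥ 0` and some `C'' > 0`. -/
theorem statement7 {H : Type*} [NormedAddCommGroup H] [InnerProductSpace ℝ H]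
    [CompleteSpace H] (b : HilbertBasis ℕ ℝ H)
    (lam : ℕ → ℝ) (hpos : ∀ i, 0 < lam i) (hanti : Antitone lam)
    (hlim : Filter.Tendsto lam Filter.atTop (nhds 0))
    (S : H →L[ℝ] H) (hS : ∀ i, S (b i) = Real.sqrt (lam i) • b i)
    (m c : ℕ) (hm : 1 ≤ m) (hc : 1 ≤ c) (ρ C : ℝ) (hρ : 0 < ρ) (hC : 0 < C)
    (hA : ∀ n : ℕ, 1 ≤ n → ∃ A : H →L[ℝ] H,
      Module.rank ℝ (LinearMap.range (A : H →ₗ[ℝ] H)) ≤ (((c * n) ^ m : ℕ) : Cardinal) ∧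
      ∑' i, (‖(S - A ∘L S) (b i)‖₊ : ℝ≥0∞) ^ 2 ≤
        ENNReal.ofReal (C ^ 2 * (n : ℝ) ^ (-ρ))) :
    ∃ C'' : ℝ, 0 < C'' ∧ ∀ n : ℕ,
      kolmogorovWidth (ellipsoid (fun i => b i) lam) n ≤
        C'' * ((n : ℝ) + 1) ^ (-(1 / 2 + ρ / (2 * (m : ℝ)))) := by
  have hm0 : (m : ℝ) ≠ 0 := by positivity
  -- the key eigenvalue bound
  have key : ∀ n : ℕ, 1 ≤ n →
      lam (2 * (c * n) ^ m - 1) * (((c * n) ^ m : ℕ) : ℝ) ≤ C ^ 2 * (n : ℝ) ^ (-ρ) := by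
    intro n hn
    obtain ⟨A, hrank, hs⟩ := hA n hn
    have hr : 1 ≤ (c * n) ^ m := Nat.one_le_pow _ _ (Nat.mul_pos hc hn)
    exact key_bound b lam hpos hanti S hS A ((c * n) ^ m) hr hrank _ (by positivity) hs
  obtain ⟨D, hDpos, hD⟩ := lam_pointwise lam hpos hanti m c hm hc ρ C hρ hC key
  refine ⟨Real.sqrt D, Real.sqrt_pos.mpr hDpos, fun n => ?_⟩
  have h1 := width_le_sqrt b lam (fun i => (hpos i).le) hanti n
  refine h1.trans ?_
  have hkk : (0:ℝ) ≤ (n : ℝ) + 1 := by positivity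
  calc Real.sqrt (lam n) ≤ Real.sqrt (D * ((n : ℝ) + 1) ^ (-(1 + ρ / (m : ℝ)))) :=
        Real.sqrt_le_sqrt (hD n)
    _ = Real.sqrt D * Real.sqrt (((n : ℝ) + 1) ^ (-(1 + ρ / (m : ℝ)))) :=
        Real.sqrt_mul hDpos.le _
    _ = Real.sqrt D * ((n : ℝ) + 1) ^ (-(1 / 2 + ρ / (2 * (m : ℝ)))) := by
        congr 1
        rw [Real.sqrt_eq_rpow, ← Real.rpow_mul hkk]
        congr 1
        rw [div_add_div _ _ (two_ne_zero) (by simpa using mul_ne_zero (two_ne_zero (α := ℝ)) hm0)]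
        field_simp
end

section
/- Let l and be a positive integer and let s ≥ r ≥ 0 be real numbers with 2l > s + 1. Then there exists a constant C > 0, depending only on l, s, r, such that for every positive integer n: ∫_0^π J_{l,n}(t) t^s dt ≤ C n^{-(s−r)} ∫_0^π J_{l,n}(t) t^r dt. -/
/-!
By Jordan's inequality, for `c = n + 1` and `0 < t ≤ π` the kernel satisfies
`J ≤ (cπ/2)^{2l}`, `J ≤ (π/t)^{2l}`, and `J ≥ (2c/π)^{2l}` once `ct ≤ 1`. Splitting `(0, π)` at
`1/c` then shows that every moment `∫ J t^e` with `-1 < e < 2l - 1` is comparable to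
`c^{2l-e-1}`, so the ratio of the `s`- and `r`-moments is `O(c^{-(s-r)}) = O(n^{-(s-r)})`.
-/

open MeasureTheory Real Set

/-- The paper's `J_{l,n}` is `jacksonKernel l (n + 1)`. -/
noncomputable def jacksonKernel (l : ℕ) (c t : ℝ) : ℝ :=
  (sin (c * t / 2) / sin (t / 2)) ^ (2 * l)

noncomputable def jacksonMoment (l : ℕ) (c e : ℝ) : ℝ :=
  ∫ t in Ioo 0 π, jacksonKernel l c t * t ^ e

lemma div_pi_le_sin_half {t : ℝ} (h0 : 0 ≤ t) (hπ : t ≤ π) : t / π ≤ sin (t / 2) := by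
  convert mul_le_sin (x := t / 2) (by linarith) (by linarith) using 1
  ring

lemma sin_half_pos {t : ℝ} (h0 : 0 < t) (hπ : t ≤ π) : 0 < sin (t / 2) :=
  sin_pos_of_pos_of_lt_pi (by linarith) (by linarith [pi_pos])

lemma abs_sin_mul_div_sin_half_le {c t : ℝ} (hc : 0 ≤ c) (h0 : 0 < t) (hπ : t ≤ π) :
    |sin (c * t / 2) / sin (t / 2)| ≤ c * π / 2 := by
  rw [abs_div, abs_of_pos (sin_half_pos h0 hπ), div_le_iff₀ (sin_half_pos h0 hπ)]
  calc |sin (c * t / 2)| ≤ c * t / 2 := by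
        simpa [abs_of_nonneg (by positivity : 0 ≤ c * t / 2)] using
          abs_sin_le_abs (x := c * t / 2)
    _ = c * π / 2 * (t / π) := by field_simp
    _ ≤ c * π / 2 * sin (t / 2) := by gcongr; exact div_pi_le_sin_half h0.le hπ

lemma abs_sin_div_sin_half_le (x : ℝ) {t : ℝ} (h0 : 0 < t) (hπ : t ≤ π) :
    |sin x / sin (t / 2)| ≤ π / t := by
  rw [abs_div, abs_of_pos (sin_half_pos h0 hπ), div_le_div_iff₀ (sin_half_pos h0 hπ) h0]
  calc |sin x| * t ≤ 1 * t := by gcongr; exact abs_sin_le_one x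
    _ = π * (t / π) := by field_simp
    _ ≤ π * sin (t / 2) := by gcongr; exact div_pi_le_sin_half h0.le hπ

lemma two_mul_div_pi_le_sin_mul_div_sin_half {c t : ℝ} (hc : 0 ≤ c) (h0 : 0 < t) (hπ : t ≤ π)
    (hct : c * t ≤ π) : 2 * c / π ≤ sin (c * t / 2) / sin (t / 2) := by
  rw [le_div_iff₀ (sin_half_pos h0 hπ)]
  calc 2 * c / π * sin (t / 2) ≤ 2 * c / π * (t / 2) := by
        gcongr; exact sin_le (by linarith)
    _ = c * t / π := by ring
    _ ≤ sin (c * t / 2) := div_pi_le_sin_half (by positivity) hct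

lemma jacksonKernel_nonneg (l : ℕ) (c t : ℝ) : 0 ≤ jacksonKernel l c t :=
  (even_two_mul l).pow_nonneg _

lemma jacksonKernel_le_pow {l : ℕ} {c t M : ℝ} (h : |sin (c * t / 2) / sin (t / 2)| ≤ M) :
    jacksonKernel l c t ≤ M ^ (2 * l) := by
  rw [jacksonKernel, ← (even_two_mul l).pow_abs]
  exact pow_le_pow_left₀ (abs_nonneg _) h _

@[fun_prop]
lemma measurable_jacksonKernel (l : ℕ) (c : ℝ) : Measurable (jacksonKernel l c) := by
  unfold jacksonKernel; fun_prop

lemma integrableOn_jacksonKernel_mul_rpow (l : ℕ) {c e : ℝ} (hc : 0 ≤ c) (he : -1 < e) :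
    IntegrableOn (fun t ↦ jacksonKernel l c t * t ^ e) (Ioo 0 π) := by
  refine ((intervalIntegral.integrableOn_Ioo_rpow_iff pi_pos).2 he).bdd_mul
    (c := (c * π / 2) ^ (2 * l)) (measurable_jacksonKernel l c).aestronglyMeasurable ?_
  filter_upwards [ae_restrict_mem measurableSet_Ioo] with t ⟨h0, hπ⟩
  rw [norm_of_nonneg (jacksonKernel_nonneg l c t)]
  exact jacksonKernel_le_pow (abs_sin_mul_div_sin_half_le hc h0 hπ.le)

lemma integral_Ioc_zero_rpow {a e : ℝ} (ha : 0 ≤ a) (he : -1 < e) :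
    ∫ t in Ioc 0 a, t ^ e = a ^ (e + 1) / (e + 1) := by
  rw [← intervalIntegral.integral_of_le ha, integral_rpow (Or.inl he), zero_rpow (by linarith),
    sub_zero]

lemma integral_Ioc_zero_inv_mul_pow_mul_rpow {c : ℝ} (hc : 0 < c) (A : ℝ) (k : ℕ) {e : ℝ}
    (he : -1 < e) :
    ∫ t in Ioc 0 c⁻¹, (c * A) ^ k * t ^ e = A ^ k / (e + 1) * c ^ ((k : ℝ) - e - 1) := by
  rw [integral_const_mul, integral_Ioc_zero_rpow (inv_nonneg.2 hc.le) he, inv_rpow hc.le,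
    ← rpow_neg hc.le, sub_sub, sub_eq_add_neg, rpow_add hc, rpow_natCast, mul_pow]
  ring

lemma pi_div_pow_mul_rpow {t : ℝ} (ht : 0 < t) (k : ℕ) (e : ℝ) :
    (π / t) ^ k * t ^ e = π ^ k * t ^ (e - k) := by
  rw [rpow_sub_natCast ht.ne', div_pow]
  field_simp

section moments

variable {l : ℕ} {c e : ℝ}

lemma inv_lt_pi_of_one_le (hc : 1 ≤ c) : c⁻¹ < π :=
  (inv_le_one_of_one_le₀ hc).trans_lt (by linarith [pi_gt_three])

lemma setIntegral_Ioc_jacksonKernel_mul_rpow_le (hc : 1 ≤ c) (he : -1 < e) :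
    ∫ t in Ioc 0 c⁻¹, jacksonKernel l c t * t ^ e ≤
      (π / 2) ^ (2 * l) / (e + 1) * c ^ (2 * l - e - 1) := by
  have hc0 : 0 < c := by linarith
  have hsub : Ioc 0 c⁻¹ ⊆ Ioo 0 π := Ioc_subset_Ioo_right (inv_lt_pi_of_one_le hc)
  calc ∫ t in Ioc 0 c⁻¹, jacksonKernel l c t * t ^ e
      ≤ ∫ t in Ioc 0 c⁻¹, (c * (π / 2)) ^ (2 * l) * t ^ e := by
        refine setIntegral_mono_on
          ((integrableOn_jacksonKernel_mul_rpow l hc0.le he).mono_set hsub)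
          ((intervalIntegral.intervalIntegrable_rpow' he).1.const_mul _) measurableSet_Ioc ?_
        rintro t ⟨h0, hle⟩
        gcongr
        rw [← mul_div_assoc]
        exact jacksonKernel_le_pow (abs_sin_mul_div_sin_half_le hc0.le h0 (hsub ⟨h0, hle⟩).2.le)
    _ = (π / 2) ^ (2 * l) / (e + 1) * c ^ (2 * l - e - 1) := by
        rw [integral_Ioc_zero_inv_mul_pow_mul_rpow hc0 _ _ he]
        push_cast
        ring_nf

lemma setIntegral_Ioo_jacksonKernel_mul_rpow_le (hc : 0 < c) (he : -1 < e)
    (hel : e + 1 < 2 * l) :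
    ∫ t in Ioo c⁻¹ π, jacksonKernel l c t * t ^ e ≤
      π ^ (2 * l) / (2 * l - e - 1) * c ^ (2 * l - e - 1) := by
  have hexp : e - ((2 * l : ℕ) : ℝ) < -1 := by push_cast; linarith
  have hpow : IntegrableOn (fun t ↦ π ^ (2 * l) * t ^ (e - ((2 * l : ℕ) : ℝ))) (Ioi c⁻¹) :=
    (integrableOn_Ioi_rpow_of_lt hexp (inv_pos.2 hc)).const_mul _
  calc ∫ t in Ioo c⁻¹ π, jacksonKernel l c t * t ^ e
      ≤ ∫ t in Ioo c⁻¹ π, π ^ (2 * l) * t ^ (e - ((2 * l : ℕ) : ℝ)) := by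
        refine setIntegral_mono_on ((integrableOn_jacksonKernel_mul_rpow l hc.le he).mono_set
          (Ioo_subset_Ioo_left (inv_nonneg.2 hc.le))) (hpow.mono_set Ioo_subset_Ioi_self)
          measurableSet_Ioo ?_
        rintro t ⟨h0, hπ⟩
        have ht : 0 < t := (inv_pos.2 hc).trans h0
        rw [← pi_div_pow_mul_rpow ht]
        gcongr
        exact jacksonKernel_le_pow (abs_sin_div_sin_half_le _ ht hπ.le)
    _ ≤ ∫ t in Ioi c⁻¹, π ^ (2 * l) * t ^ (e - ((2 * l : ℕ) : ℝ)) := by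
        refine setIntegral_mono_set hpow ?_ Ioo_subset_Ioi_self.eventuallyLE
        filter_upwards [ae_restrict_mem measurableSet_Ioi] with t ht
        exact mul_nonneg (by positivity) (rpow_nonneg ((inv_pos.2 hc).trans ht).le _)
    _ = π ^ (2 * l) / (2 * l - e - 1) * c ^ (2 * l - e - 1) := by
        rw [integral_const_mul, integral_Ioi_rpow_of_lt hexp (inv_pos.2 hc), inv_rpow hc.le,
          ← rpow_neg hc.le]
        push_cast
        rw [neg_div, ← div_neg]
        ring_nf

lemma jacksonMoment_le (hc : 1 ≤ c) (he : -1 < e) (hel : e + 1 < 2 * l) :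
    jacksonMoment l c e ≤
      ((π / 2) ^ (2 * l) / (e + 1) + π ^ (2 * l) / (2 * l - e - 1)) * c ^ (2 * l - e - 1) := by
  have hc0 : 0 < c := by linarith
  have hsplit : Ioc 0 c⁻¹ ∪ Ioo c⁻¹ π = Ioo 0 π :=
    Ioc_union_Ioo_eq_Ioo (inv_nonneg.2 hc0.le) (inv_lt_pi_of_one_le hc)
  have hint := integrableOn_jacksonKernel_mul_rpow l hc0.le he
  rw [jacksonMoment, ← hsplit, setIntegral_union (Ioc_disjoint_Ioi_same.mono_right
      Ioo_subset_Ioi_self) measurableSet_Ioo (hint.mono_set (hsplit ▸ subset_union_left))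
      (hint.mono_set (hsplit ▸ subset_union_right)), add_mul]
  exact add_le_add (setIntegral_Ioc_jacksonKernel_mul_rpow_le hc he)
    (setIntegral_Ioo_jacksonKernel_mul_rpow_le hc0 he hel)

lemma le_jacksonMoment (hc : 1 ≤ c) (he : -1 < e) :
    (2 / π) ^ (2 * l) / (e + 1) * c ^ (2 * l - e - 1) ≤ jacksonMoment l c e := by
  have hc0 : 0 < c := by linarith
  have hsub : Ioc 0 c⁻¹ ⊆ Ioo 0 π := Ioc_subset_Ioo_right (inv_lt_pi_of_one_le hc)
  have hint := integrableOn_jacksonKernel_mul_rpow l hc0.le he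
  calc (2 / π) ^ (2 * l) / (e + 1) * c ^ (2 * l - e - 1)
      = ∫ t in Ioc 0 c⁻¹, (c * (2 / π)) ^ (2 * l) * t ^ e := by
        rw [integral_Ioc_zero_inv_mul_pow_mul_rpow hc0 _ _ he]
        push_cast
        ring_nf
    _ ≤ ∫ t in Ioc 0 c⁻¹, jacksonKernel l c t * t ^ e := by
        refine setIntegral_mono_on ((intervalIntegral.intervalIntegrable_rpow' he).1.const_mul _)
          (hint.mono_set hsub) measurableSet_Ioc ?_
        rintro t ⟨h0, hle⟩
        have hct : c * t ≤ π := by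
          calc c * t ≤ c * c⁻¹ := by gcongr
            _ ≤ π := by rw [mul_inv_cancel₀ hc0.ne']; linarith [pi_gt_three]
        gcongr
        rw [show c * (2 / π) = 2 * c / π by ring, jacksonKernel]
        exact pow_le_pow_left₀ (by positivity)
          (two_mul_div_pi_le_sin_mul_div_sin_half hc0.le h0 (hsub ⟨h0, hle⟩).2.le hct) _
    _ ≤ jacksonMoment l c e := by
        refine setIntegral_mono_set hint ?_ hsub.eventuallyLE
        filter_upwards [ae_restrict_mem measurableSet_Ioo] with t ht
        exact mul_nonneg (jacksonKernel_nonneg l c t) (rpow_nonneg ht.1.le e)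

end moments

theorem statement8_general (l : ℕ) (s r : ℝ) (hr : 0 ≤ r) (hrs : r ≤ s)
    (hls : s + 1 < 2 * (l : ℝ)) :
    ∃ C : ℝ, 0 < C ∧ ∀ n : ℕ, 1 ≤ n →
      (∫ t in Set.Ioo (0 : ℝ) Real.pi,
          (Real.sin (((n : ℝ) + 1) * t / 2) / Real.sin (t / 2)) ^ (2 * l) * t ^ s) ≤
        C * (n : ℝ) ^ (-(s - r)) *
          ∫ t in Set.Ioo (0 : ℝ) Real.pi,
            (Real.sin (((n : ℝ) + 1) * t / 2) / Real.sin (t / 2)) ^ (2 * l) * t ^ r := by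
  set A := (π / 2) ^ (2 * l) / (s + 1) + π ^ (2 * l) / (2 * l - s - 1)
  set B := (2 / π) ^ (2 * l) / (r + 1)
  have hA : 0 < A :=
    add_pos (div_pos (by positivity) (by linarith)) (div_pos (by positivity) (by linarith))
  have hB : 0 < B := div_pos (by positivity) (by linarith)
  refine ⟨A / B, div_pos hA hB, fun n hn ↦ ?_⟩
  have hn0 : (0 : ℝ) < n := by exact_mod_cast hn
  have hc : (1 : ℝ) ≤ n + 1 := by linarith
  change jacksonMoment l (n + 1) s ≤ A / B * (n : ℝ) ^ (-(s - r)) * jacksonMoment l (n + 1) r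
  calc jacksonMoment l (n + 1) s
      ≤ A * ((n : ℝ) + 1) ^ (2 * l - s - 1) := jacksonMoment_le hc (by linarith) hls
    _ = A / B * ((n : ℝ) + 1) ^ (-(s - r)) * (B * ((n : ℝ) + 1) ^ (2 * l - r - 1)) := by
        rw [mul_mul_mul_comm, div_mul_cancel₀ _ hB.ne', ← rpow_add (by linarith)]
        ring_nf
    _ ≤ A / B * (n : ℝ) ^ (-(s - r)) * jacksonMoment l (n + 1) r := by
        gcongr A / B * ?_ * ?_
        · exact rpow_le_rpow_of_nonpos hn0 (by linarith) (by linarith)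
        · exact le_jacksonMoment hc (by linarith)

/-- Moment estimate for the generalized Jackson kernel
`J_{l,n}(t) = (sin((n+1)t/2)/sin(t/2))^{2l}`: if `s ≥ r ≥ 0` and `2l > s + 1`, there is a
constant `C > 0` (depending only on `l, s, r`) with
`∫_0^π J_{l,n}(t) t^s dt ≤ C n^{-(s-r)} ∫_0^π J_{l,n}(t) t^r dt` for every `n ≥ 1`. -/
theorem statement8 (l : ℕ) (hl : 1 ≤ l) (s r : ℝ) (hr : 0 ≤ r) (hrs : r ≤ s)
    (hls : s + 1 < 2 * (l : ℝ)) :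
    ∃ C : ℝ, 0 < C ∧ ∀ n : ℕ, 1 ≤ n →
      (∫ t in Set.Ioo (0 : ℝ) Real.pi,
          (Real.sin (((n : ℝ) + 1) * t / 2) / Real.sin (t / 2)) ^ (2 * l) * t ^ s) ≤
        C * (n : ℝ) ^ (-(s - r)) *
          ∫ t in Set.Ioo (0 : ℝ) Real.pi,
            (Real.sin (((n : ℝ) + 1) * t / 2) / Real.sin (t / 2)) ^ (2 * l) * t ^ r :=
  statement8_general l s r hr hrs hls
end
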